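/- Let B and C be orthogonal projection operators on ℝ^N, and let x be a nonzero vector with ‖Bx‖₂/‖x‖₂ = a and ‖Cx‖₂/‖x‖₂ = b, where 0 ≤ a, b ≤ 1. Then arccos(a) + arccos(b) ≥ arccos(σ_max(BC)), where σ_max(BC) denotes the largest singular value of the product BC. -/

import Mathlib

/-!
Normalise `B x` and `C x`: the angle between `x` and `B x` is `arccos a`, since `⟪x, B x⟫ = ‖B x‖²`
for an orthogonal projection, and likewise the angle between `x` and `C x` is `arccos b`. Writing
`⟪B x, C x⟫ = ⟪B x, (B C) (C x)⟫` shows that the cosine of the angle between `B x` and `C x` is at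
most `‖B C‖ = σ_max (B C)`. The triangle inequality for angles then bounds `arccos ‖B C‖` by
`arccos a + arccos b`.
-/

open Matrix InnerProductGeometry RealInnerProductSpace

theorem IsIdempotentElem.apply_apply {F α : Type*} [Mul F] [FunLike F α α] [IsMulApplyEqComp F α]
    {f : F} (hf : IsIdempotentElem f) (x : α) : f (f x) = f x := by
  rw [← mul_apply_eq_comp, hf.eq]

namespace IsStarProjection

variable {E : Type*} [NormedAddCommGroup E] [InnerProductSpace ℝ E] [CompleteSpace E]
  {P Q : E →L[ℝ] E}

theorem inner_apply_left (hP : IsStarProjection P) (x y : E) : ⟪P x, y⟫ = ⟪x, P y⟫ :=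
  hP.isSelfAdjoint.isSymmetric x y

theorem inner_self_apply (hP : IsStarProjection P) (x : E) : ⟪x, P x⟫ = ‖P x‖ ^ 2 := by
  rw [← real_inner_self_eq_norm_sq, hP.inner_apply_left, hP.isIdempotentElem.apply_apply]

theorem angle_self_apply (hP : IsStarProjection P) (x : E) :
    angle x (P x) = Real.arccos (‖P x‖ / ‖x‖) := by
  rw [angle, hP.inner_self_apply]
  rcases eq_or_ne ‖P x‖ 0 with h | h
  · simp [h]
  · rw [sq, mul_comm ‖x‖, ← div_div, mul_div_cancel_right₀ _ h]

theorem inner_apply_apply_le (hP : IsStarProjection P) (hQ : IsIdempotentElem Q) (x y : E) :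
    ⟪P x, Q y⟫ ≤ ‖P * Q‖ * (‖P x‖ * ‖Q y‖) :=
  calc ⟪P x, Q y⟫ = ⟪P x, (P * Q) (Q y)⟫ := by
        rw [mul_apply_eq_comp, hQ.apply_apply, ← hP.inner_apply_left,
          hP.isIdempotentElem.apply_apply]
    _ ≤ ‖P x‖ * ‖(P * Q) (Q y)‖ := real_inner_le_norm _ _
    _ ≤ ‖P x‖ * (‖P * Q‖ * ‖Q y‖) := by gcongr; exact (P * Q).le_opNorm _
    _ = ‖P * Q‖ * (‖P x‖ * ‖Q y‖) := by ring

theorem arccos_opNorm_mul_le_angle (hP : IsStarProjection P) (hQ : IsIdempotentElem Q)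
    (x y : E) : Real.arccos ‖P * Q‖ ≤ angle (P x) (Q y) := by
  refine Real.arccos_le_arccos ?_
  rcases (mul_nonneg (norm_nonneg (P x)) (norm_nonneg (Q y))).eq_or_lt with h | h
  · rw [← h, div_zero]
    exact norm_nonneg _
  · exact (div_le_iff₀ h).2 (hP.inner_apply_apply_le hQ x y)

theorem arccos_opNorm_mul_le (hP : IsStarProjection P) (hQ : IsStarProjection Q) (x : E) :
    Real.arccos ‖P * Q‖ ≤ Real.arccos (‖P x‖ / ‖x‖) + Real.arccos (‖Q x‖ / ‖x‖) :=
  calc Real.arccos ‖P * Q‖ ≤ angle (P x) (Q x) :=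
        hP.arccos_opNorm_mul_le_angle hQ.isIdempotentElem x x
    _ ≤ angle (P x) x + angle x (Q x) := angle_le_angle_add_angle _ _ _
    _ = Real.arccos (‖P x‖ / ‖x‖) + Real.arccos (‖Q x‖ / ‖x‖) := by
        rw [angle_comm, hP.angle_self_apply, hQ.angle_self_apply]

end IsStarProjection

theorem Matrix.isStarProjection_of_isSymm {n : Type*} {B : Matrix n n ℝ} [Fintype n]
    (hsymm : B.IsSymm) (hidem : B * B = B) : IsStarProjection B :=
  ⟨hidem, by rwa [IsSelfAdjoint, star_eq_conjTranspose, conjTranspose_eq_transpose_of_trivial]⟩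

theorem graph_uncertainty_principle_general
    {N : ℕ} (B C : Matrix (Fin N) (Fin N) ℝ)
    (hBsymm : B.IsSymm) (hBidem : B * B = B)
    (hCsymm : C.IsSymm) (hCidem : C * C = C)
    (x : EuclideanSpace ℝ (Fin N))
    (a b : ℝ)
    (haB : ‖Matrix.toEuclideanCLM (𝕜 := ℝ) B x‖ / ‖x‖ = a)
    (hbC : ‖Matrix.toEuclideanCLM (𝕜 := ℝ) C x‖ / ‖x‖ = b) :
    Real.arccos a + Real.arccos b ≥
      Real.arccos ‖Matrix.toEuclideanCLM (𝕜 := ℝ) (B * C)‖ := by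
  subst haB hbC
  rw [map_mul]
  exact ((isStarProjection_of_isSymm hBsymm hBidem).map _).arccos_opNorm_mul_le
    ((isStarProjection_of_isSymm hCsymm hCidem).map _) x

/-- Uncertainty principle for graph signals (Tsitsvero et al.): if `B` and `C` are orthogonal
projections on `ℝ^N`, `x ≠ 0` has graph-domain concentration `‖Bx‖/‖x‖ = a` and spectral
concentration `‖Cx‖/‖x‖ = b` with `0 ≤ a, b ≤ 1`, then
`arccos a + arccos b ≥ arccos (σ_max (B C))`. -/
theorem graph_uncertainty_principle
    {N : ℕ} (B C : Matrix (Fin N) (Fin N) ℝ)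
    (hBsymm : B.IsSymm) (hBidem : B * B = B)
    (hCsymm : C.IsSymm) (hCidem : C * C = C)
    (x : EuclideanSpace ℝ (Fin N)) (hx : x ≠ 0)
    (a b : ℝ) (ha0 : 0 ≤ a) (ha1 : a ≤ 1) (hb0 : 0 ≤ b) (hb1 : b ≤ 1)
    (haB : ‖Matrix.toEuclideanCLM (𝕜 := ℝ) B x‖ / ‖x‖ = a)
    (hbC : ‖Matrix.toEuclideanCLM (𝕜 := ℝ) C x‖ / ‖x‖ = b) :
    Real.arccos a + Real.arccos b ≥
      Real.arccos ‖Matrix.toEuclideanCLM (𝕜 := ℝ) (B * C)‖ :=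
  graph_uncertainty_principle_general B C hBsymm hBidem hCsymm hCidem x a b haB hbC
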